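/- arXiv:1005.0928 — 2 statements merged into one kernel-verified Lean document; each statement's English description precedes it below -/
import Mathlib

section
/- The average pairwise hinge loss R(w) = (1/N) * Σ_{(i,j): y_i < y_j} max(0, 1 + ⟨w,x_i⟩ - ⟨w,x_j⟩) equals (1/N) * Σ_{i=1}^{m} ((c_i - d_i)·⟨w,x_i⟩ + c_i), where c_i = |{j : y_i < y_j ∧ ⟨w,x_i⟩ > ⟨w,x_j⟩ - 1}| and d_i = |{j : y_i > y_j ∧ ⟨w,x_i⟩ < ⟨w,x_j⟩ + 1}|. -/
open Finset

theorem pairwise_hinge_loss_reformulation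
    (m n : ℕ) (x : Fin m → Fin n → ℝ) (y : Fin m → ℝ) (w : Fin n → ℝ)
    (p : Fin m → ℝ) (hp : ∀ i, p i = ∑ k, w k * x i k)
    (N : ℕ) (hN : N = (univ.filter (fun ij : Fin m × Fin m => y ij.1 < y ij.2)).card)
    (hNpos : 0 < N)
    (c d : Fin m → ℕ)
    (hc : ∀ i, c i = (univ.filter (fun j : Fin m => y i < y j ∧ p i > p j - 1)).card)
    (hd : ∀ i, d i = (univ.filter (fun j : Fin m => y i > y j ∧ p i < p j + 1)).card) :
    (1 / (N : ℝ)) *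
        ∑ ij ∈ univ.filter (fun ij : Fin m × Fin m => y ij.1 < y ij.2),
          max 0 (1 + p ij.1 - p ij.2)
      = (1 / (N : ℝ)) * ∑ i, (((c i : ℝ) - (d i : ℝ)) * p i + (c i : ℝ)) := by
  congr 1
  rw [Finset.sum_filter]
  rw [Fintype.sum_prod_type]
  have key : ∀ i j : Fin m,
      (if y i < y j then max 0 (1 + p i - p j) else 0)
        = (if y i < y j ∧ p i > p j - 1 then (1 + p i) else 0)
          - (if y i < y j ∧ p i > p j - 1 then p j else 0) := by
    intro i j
    by_cases h1 : y i < y j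
    · by_cases h2 : p i > p j - 1
      · simp [h1, h2]
        linarith
      · simp [h1, h2]
        linarith
    · simp [h1]
  calc ∑ i, ∑ j, (if y i < y j then max 0 (1 + p i - p j) else 0)
      = ∑ i, ∑ j, ((if y i < y j ∧ p i > p j - 1 then (1 + p i) else 0)
          - (if y i < y j ∧ p i > p j - 1 then p j else 0)) := by
        simp_rw [key]
    _ = (∑ i, ∑ j, (if y i < y j ∧ p i > p j - 1 then (1 + p i) else 0))
          - ∑ i, ∑ j, (if y i < y j ∧ p i > p j - 1 then p j else 0) := by
        simp [Finset.sum_sub_distrib]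
    _ = (∑ i, (c i : ℝ) * (1 + p i)) - ∑ j, (d j : ℝ) * p j := by
        congr 1
        · refine Finset.sum_congr rfl fun i _ => ?_
          rw [← Finset.sum_filter, Finset.sum_const, hc i, nsmul_eq_mul]
        · rw [Finset.sum_comm]
          refine Finset.sum_congr rfl fun j _ => ?_
          have hdj : (univ.filter (fun i : Fin m => y i < y j ∧ p i > p j - 1))
              = univ.filter (fun i : Fin m => y j > y i ∧ p j < p i + 1) := by
            apply Finset.filter_congr
            intro i _
            constructor <;> (rintro ⟨h1, h2⟩; exact ⟨h1, by linarith⟩)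
          rw [← Finset.sum_filter, Finset.sum_const, hdj, ← hd j, nsmul_eq_mul]
    _ = ∑ i, (((c i : ℝ) - (d i : ℝ)) * p i + (c i : ℝ)) := by
        rw [← Finset.sum_sub_distrib]
        exact Finset.sum_congr rfl fun i _ => by ring
end

section
/- The vector g = (1/N) * Σ_{i=1}^{m} (c_i - d_i)·x_i is a subgradient at w of the function R(v) = (1/N) * Σ_{(i,j): y_i < y_j} max(0, 1 + ⟨v,x_i⟩ - ⟨v,x_j⟩); that is, for all v ∈ ℝ^n, R(v) ≥ R(w) + ⟨v - w, g⟩. -/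
open Finset

/-!
The hinge `t ↦ max 0 t` is convex with subgradient `1` where `t > 0` and `0` elsewhere, so each
pair term of `R` lies above its tangent at `w`. Summing these tangent inequalities, the linear
part is a sum of `⟨v - w, x_i - x_j⟩` over the pairs whose margin is violated at `w`; regrouped by
index it becomes `∑ i, (c_i - d_i) ⟨v - w, x_i⟩`, since `c_i` and `d_i` count the violated pairs
in which `i` comes first and second, respectively.
-/

theorem max_zero_add_ite_sub_le {α : Type*} [AddCommGroup α] [LinearOrder α]
    [IsOrderedAddMonoid α] (a b : α) : max 0 a + (if 0 < a then b - a else 0) ≤ max 0 b := by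
  split_ifs with ha
  · rw [max_eq_right ha.le, add_sub_cancel]
    exact le_max_right 0 b
  · rw [max_eq_left (not_lt.mp ha), add_zero]
    exact le_max_left 0 b

theorem sum_max_zero_add_sum_filter_sub_le {ι α : Type*} [AddCommGroup α] [LinearOrder α]
    [IsOrderedAddMonoid α] (s : Finset ι) (f f' : ι → α) :
    ∑ p ∈ s, max 0 (f p) + ∑ p ∈ s with 0 < f p, (f' p - f p) ≤ ∑ p ∈ s, max 0 (f' p) := by
  rw [sum_filter, ← sum_add_distrib]
  exact sum_le_sum fun p _ => max_zero_add_ite_sub_le (f p) (f' p)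

section Pairs

variable {ι R : Type*} [Fintype ι]

theorem sum_filter_fst_eq_sum_card_mul [Semiring R] (r : ι → ι → Prop) [DecidableRel r]
    (z : ι → R) : ∑ ij : ι × ι with r ij.1 ij.2, z ij.1 = ∑ i, (#{j | r i j} : R) * z i := by
  rw [sum_filter, Fintype.sum_prod_type]
  refine sum_congr rfl fun i _ => ?_
  dsimp only
  rw [← sum_filter, sum_const, nsmul_eq_mul]

theorem sum_filter_sub_eq_sum_card_sub_card_mul [Ring R] (r : ι → ι → Prop) [DecidableRel r]
    (z : ι → R) :
    ∑ ij : ι × ι with r ij.1 ij.2, (z ij.1 - z ij.2)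
      = ∑ i, ((#{j | r i j} : R) - #{j | r j i}) * z i := by
  have hswap : ∑ ij : ι × ι with r ij.1 ij.2, z ij.2 = ∑ ij : ι × ι with r ij.2 ij.1, z ij.1 :=
    sum_equiv (Equiv.prodComm ι ι) (by simp) (by simp)
  rw [sum_sub_distrib, hswap, sum_filter_fst_eq_sum_card_mul r,
    sum_filter_fst_eq_sum_card_mul (fun i j => r j i), ← sum_sub_distrib]
  simp only [sub_mul]

theorem sum_margin_violations_sub_eq_sum_card_sub_card_mul (y s z : ι → ℝ) :
    ∑ ij ∈ {ij : ι × ι | y ij.1 < y ij.2} with 0 < 1 + s ij.1 - s ij.2, (z ij.1 - z ij.2)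
      = ∑ i, ((#{j | y i < y j ∧ s i > s j - 1} : ℝ) - #{j | y i > y j ∧ s i < s j + 1}) * z i := by
  have hmargin : ∀ a b : ℝ, 0 < 1 + a - b ↔ a > b - 1 := fun a b => by
    constructor <;> intro h <;> linarith
  have hflip : ∀ i j, y i > y j ∧ s i < s j + 1 ↔ y j < y i ∧ s j > s i - 1 := fun i j =>
    and_congr Iff.rfl (by constructor <;> intro h <;> linarith)
  simp_rw [filter_filter, hmargin, hflip]
  exact sum_filter_sub_eq_sum_card_sub_card_mul (fun i j => y i < y j ∧ s i > s j - 1) z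

end Pairs

theorem ranksvm_subgradient_general
    (m n : ℕ) (x : Fin m → Fin n → ℝ) (y : Fin m → ℝ) (w : Fin n → ℝ)
    (N : ℕ)
    (c d : Fin m → ℕ)
    (hc : ∀ i, c i = (univ.filter (fun j : Fin m =>
        y i < y j ∧ (∑ k, w k * x i k) > (∑ k, w k * x j k) - 1)).card)
    (hd : ∀ i, d i = (univ.filter (fun j : Fin m =>
        y i > y j ∧ (∑ k, w k * x i k) < (∑ k, w k * x j k) + 1)).card)
    (R : (Fin n → ℝ) → ℝ)
    (hR : ∀ v, R v = (1 / (N : ℝ)) *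
        ∑ ij ∈ univ.filter (fun ij : Fin m × Fin m => y ij.1 < y ij.2),
          max 0 (1 + (∑ k, v k * x ij.1 k) - (∑ k, v k * x ij.2 k)))
    (g : Fin n → ℝ)
    (hg : ∀ k, g k = (1 / (N : ℝ)) * ∑ i, ((c i : ℝ) - (d i : ℝ)) * x i k) :
    ∀ v : Fin n → ℝ, R v ≥ R w + ∑ k, (v k - w k) * g k := by
  intro v
  set wx : Fin m → ℝ := fun i => ∑ k, w k * x i k
  set vx : Fin m → ℝ := fun i => ∑ k, v k * x i k
  have hinner : ∑ k, (v k - w k) * g k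
      = 1 / (N : ℝ) * ∑ i, ((c i : ℝ) - d i) * (vx i - wx i) := by
    simp only [hg, vx, wx, ← sum_sub_distrib, mul_sum]
    rw [sum_comm]
    exact sum_congr rfl fun i _ => sum_congr rfl fun k _ => by ring
  have hviolated : ∑ ij ∈ {ij : Fin m × Fin m | y ij.1 < y ij.2} with 0 < 1 + wx ij.1 - wx ij.2,
        ((1 + vx ij.1 - vx ij.2) - (1 + wx ij.1 - wx ij.2))
      = ∑ i, ((c i : ℝ) - d i) * (vx i - wx i) := by
    simp only [hc, hd]
    rw [← sum_margin_violations_sub_eq_sum_card_sub_card_mul y wx (fun i => vx i - wx i)]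
    exact sum_congr rfl fun _ _ => by ring
  have hhinge := sum_max_zero_add_sum_filter_sub_le {ij : Fin m × Fin m | y ij.1 < y ij.2}
    (fun ij => 1 + wx ij.1 - wx ij.2) (fun ij => 1 + vx ij.1 - vx ij.2)
  rw [hR, hR, hinner, ge_iff_le, ← mul_add, ← hviolated]
  exact mul_le_mul_of_nonneg_left hhinge (by positivity)

theorem ranksvm_subgradient
    (m n : ℕ) (x : Fin m → Fin n → ℝ) (y : Fin m → ℝ) (w : Fin n → ℝ)
    (N : ℕ) (hN : N = (univ.filter (fun ij : Fin m × Fin m => y ij.1 < y ij.2)).card)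
    (hNpos : 0 < N)
    (c d : Fin m → ℕ)
    (hc : ∀ i, c i = (univ.filter (fun j : Fin m =>
        y i < y j ∧ (∑ k, w k * x i k) > (∑ k, w k * x j k) - 1)).card)
    (hd : ∀ i, d i = (univ.filter (fun j : Fin m =>
        y i > y j ∧ (∑ k, w k * x i k) < (∑ k, w k * x j k) + 1)).card)
    (R : (Fin n → ℝ) → ℝ)
    (hR : ∀ v, R v = (1 / (N : ℝ)) *
        ∑ ij ∈ univ.filter (fun ij : Fin m × Fin m => y ij.1 < y ij.2),
          max 0 (1 + (∑ k, v k * x ij.1 k) - (∑ k, v k * x ij.2 k)))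
    (g : Fin n → ℝ)
    (hg : ∀ k, g k = (1 / (N : ℝ)) * ∑ i, ((c i : ℝ) - (d i : ℝ)) * x i k) :
    ∀ v : Fin n → ℝ, R v ≥ R w + ∑ k, (v k - w k) * g k :=
  ranksvm_subgradient_general m n x y w N c d hc hd R hR g hg
end
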